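/- arXiv:2004.14716 — 8 statements merged into one kernel-verified Lean document; each statement's English description precedes it below -/
import Mathlib

section
/- Let λ₁, λ₂ : ℝ^N → ℝ be integrable, compactly supported filters, neither of which is zero almost everywhere, and let T : ℝ^N → ℝ^N be an invertible linear map. If Λ_{λ₁} f = 𝒯_T (Λ_{λ₂} f) for all locally integrable f, i.e. (f ⋆ λ₁)(x) = (f ⋆ λ₂)(T⁻¹ x) for all f and all x, then T is the identity map. -/
open MeasureTheory

/-!
Testing the hypothesis against indicators of finite-measure sets shows that for every `x` the
kernels `y ↦ λ₁ (x - y)` and `y ↦ λ₂ (T⁻¹ x - y)` agree almost everywhere, i.e.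
`λ₁ = λ₂ (· + (T⁻¹ x - x))` a.e. Taking `x = 0` gives `λ₁ = λ₂` a.e., so `λ₂` is a.e. invariant
under translation by every vector of the subspace `range (T⁻¹ - 1)`. A compactly supported
function invariant under translation by arbitrarily long vectors vanishes a.e., and `λ₂` does
not, so `T⁻¹ = 1`.
-/

theorem ae_eq_of_forall_integral_mul_eq {α : Type*} [MeasurableSpace α] [TopologicalSpace α]
    {μ : Measure α} [SigmaFinite μ] {g h : α → ℝ} (hg : Integrable g μ) (hh : Integrable h μ)
    (H : ∀ f, LocallyIntegrable f μ → ∫ y, f y * g y ∂μ = ∫ y, f y * h y ∂μ) :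
    g =ᵐ[μ] h := by
  refine ae_eq_of_forall_setIntegral_eq_of_sigmaFinite (fun _ _ _ => hg.integrableOn)
    (fun _ _ _ => hh.integrableOn) fun s hs hμs => ?_
  have hind : LocallyIntegrable (s.indicator 1) μ :=
    ((integrable_indicator_iff hs).2 (integrableOn_const (C := (1 : ℝ)) hμs.ne)).locallyIntegrable
  have hmul (k : α → ℝ) : ∫ y, s.indicator 1 y * k y ∂μ = ∫ y in s, k y ∂μ := by
    simp_rw [← Set.indicator_mul_left, Pi.one_apply, one_mul, integral_indicator hs]
  simpa only [hmul] using H _ hind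

theorem ae_eq_comp_add_of_ae_eq_comp_sub {G M : Type*} [AddCommGroup G] [MeasurableSpace G]
    [MeasurableAdd G] [MeasurableNeg G] {μ : Measure G} [μ.IsAddLeftInvariant] [μ.IsNegInvariant]
    {g h : G → M} {a b : G} (H : (fun y => g (a - y)) =ᵐ[μ] fun y => h (b - y)) :
    ∀ᵐ z ∂μ, g z = h (z + (b - a)) := by
  filter_upwards [(Measure.measurePreserving_sub_left μ a).quasiMeasurePreserving.ae_eq_comp H]
    with z hz
  simp only [Function.comp_apply, sub_sub_cancel] at hz
  rwa [sub_sub_eq_add_sub, add_sub_right_comm, add_comm] at hz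

theorem HasCompactSupport.exists_eq_zero_of_eq_comp_add {E M : Type*} [SeminormedAddCommGroup E]
    [Zero M] {g : E → M} (hg : HasCompactSupport g) :
    ∃ R, ∀ w z, R < ‖w‖ → g z = g (z + w) → g z = 0 := by
  obtain ⟨r, hr⟩ := hg.isBounded.subset_closedBall 0
  refine ⟨2 * r, fun w z hw hz => by_contra fun hz0 => ?_⟩
  have hz_le : ‖z‖ ≤ r := by simpa using hr (subset_tsupport g hz0)
  have hzw_ne : g (z + w) ≠ 0 := hz ▸ hz0
  have hzw_le : ‖z + w‖ ≤ r := by simpa using hr (subset_tsupport g hzw_ne)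
  have := norm_sub_le (z + w) z
  rw [add_sub_cancel_left] at this
  linarith

theorem HasCompactSupport.ae_eq_zero_of_forall_ae_eq_comp_add_smul {E M : Type*}
    [NormedAddCommGroup E] [NormedSpace ℝ E] [MeasurableSpace E] [Zero M] {μ : Measure E}
    {g : E → M} (hg : HasCompactSupport g) {v : E} (hv : v ≠ 0)
    (H : ∀ t : ℝ, g =ᵐ[μ] fun z => g (z + t • v)) : g =ᵐ[μ] 0 := by
  obtain ⟨R, hR⟩ := hg.exists_eq_zero_of_eq_comp_add
  have hv' : 0 < ‖v‖ := norm_pos_iff.2 hv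
  set t := (|R| + 1) / ‖v‖
  have ht : R < ‖t • v‖ := by
    rw [norm_smul, Real.norm_eq_abs, abs_of_nonneg (by positivity), div_mul_cancel₀ _ hv'.ne']
    linarith [le_abs_self R]
  filter_upwards [H t] with z hz using hR _ z ht hz

theorem conv_eq_transformed_conv_implies_identity_general {N : ℕ}
    (lam1 lam2 : EuclideanSpace ℝ (Fin N) → ℝ)
    (h1_int : Integrable lam1)
    (h2_int : Integrable lam2) (h2_supp : HasCompactSupport lam2)
    (h2_ne : ¬ lam2 =ᵐ[volume] 0)
    (T : EuclideanSpace ℝ (Fin N) ≃ₗ[ℝ] EuclideanSpace ℝ (Fin N))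
    (h : ∀ f : EuclideanSpace ℝ (Fin N) → ℝ, LocallyIntegrable f →
      ∀ x, (∫ y, f y * lam1 (x - y)) = ∫ y, f y * lam2 (T.symm x - y)) :
    ∀ x, T x = x := by
  have hshift (x) : ∀ᵐ z, lam1 z = lam2 (z + (T.symm x - x)) :=
    ae_eq_comp_add_of_ae_eq_comp_sub <| ae_eq_of_forall_integral_mul_eq
      (h1_int.comp_sub_left x) (h2_int.comp_sub_left _) fun f hf => h f hf x
  have h12 : lam1 =ᵐ[volume] lam2 := by
    filter_upwards [hshift 0] with z hz
    simpa using hz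
  intro x
  by_contra hx
  refine h2_ne (h2_supp.ae_eq_zero_of_forall_ae_eq_comp_add_smul (sub_ne_zero.2 (Ne.symm hx))
    fun t => ?_)
  filter_upwards [h12, hshift (t • T x)] with z hz1 hz2
  rw [← hz1, hz2, map_smul, LinearEquiv.symm_apply_apply, smul_sub]

/-- If `λ₁, λ₂` are integrable compactly supported filters, neither of which
is zero almost everywhere, `T` is an invertible linear map, and
`Λ_{λ₁} f = 𝒯_T (Λ_{λ₂} f)` for all locally integrable `f`, i.e.
`(f ⋆ λ₁)(x) = (f ⋆ λ₂)(T⁻¹ x)` for all such `f` and all `x`, then `T` is the identity. -/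
theorem conv_eq_transformed_conv_implies_identity {N : ℕ}
    (lam1 lam2 : EuclideanSpace ℝ (Fin N) → ℝ)
    (h1_int : Integrable lam1) (h1_supp : HasCompactSupport lam1)
    (h1_ne : ¬ lam1 =ᵐ[volume] 0)
    (h2_int : Integrable lam2) (h2_supp : HasCompactSupport lam2)
    (h2_ne : ¬ lam2 =ᵐ[volume] 0)
    (T : EuclideanSpace ℝ (Fin N) ≃ₗ[ℝ] EuclideanSpace ℝ (Fin N))
    (h : ∀ f : EuclideanSpace ℝ (Fin N) → ℝ, LocallyIntegrable f →
      ∀ x, (∫ y, f y * lam1 (x - y)) = ∫ y, f y * lam2 (T.symm x - y)) :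
    ∀ x, T x = x :=
  conv_eq_transformed_conv_implies_identity_general lam1 lam2 h1_int h2_int h2_supp h2_ne T h
end

section
/- Let λ : ℝ^N → ℝ be an integrable, compactly supported filter that is not zero almost everywhere, and let T_g, T_h : ℝ^N → ℝ^N be invertible linear maps. If 𝒯_{T_g} (Λ_λ (𝒯_{T_h} f)) = Λ_λ f for all locally integrable f, then T_g = T_h⁻¹ and λ(y) = |det T_h| · λ(T_h y) for almost every y. -/
open MeasureTheory

/-!
Change variables `y = T_h z` in the hypothesis and test it against indicators of sets of finite
measure: for every `x`, `λ(x - z) = |det T_h| · λ(T_g⁻¹ x - T_h z)` for a.e. `z`. At `x = 0`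
(after `z ↦ -z`) this is the scaling identity for `λ`. Feeding the scaling identity back in
shows that `λ` is a.e. invariant under translation by `T_h x - T_g⁻¹ x`, hence under all its
integer multiples; a compactly supported function with a nonzero a.e. period vanishes a.e.,
so `T_h x = T_g⁻¹ x`.
-/

theorem ae_eq_of_forall_integral_mul_eq_s5 {α : Type*} [MeasurableSpace α] {μ : Measure α}
    {g₁ g₂ : α → ℝ} (hg₁ : Integrable g₁ μ) (hg₂ : Integrable g₂ μ)
    (h : ∀ f : α → ℝ, Integrable f μ → ∫ x, f x * g₁ x ∂μ = ∫ x, f x * g₂ x ∂μ) :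
    g₁ =ᵐ[μ] g₂ := by
  refine hg₁.ae_eq_of_forall_setIntegral_eq _ _ hg₂ fun s hs hμs => ?_
  have hind : ∀ g : α → ℝ, (fun x => s.indicator 1 x * g x) = s.indicator g := fun g => by
    ext x; by_cases hx : x ∈ s <;> simp [hx]
  have h1 : Integrable (s.indicator (1 : α → ℝ)) μ :=
    (integrable_indicator_iff hs).mpr (integrableOn_const hμs.ne)
  simpa only [hind, integral_indicator hs] using h _ h1

section AddHaar

variable {E : Type*} [NormedAddCommGroup E] [NormedSpace ℝ E] [FiniteDimensional ℝ E]
  [MeasurableSpace E] [BorelSpace E] (μ : Measure E) [μ.IsAddHaarMeasure]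
  {F : Type*} [NormedAddCommGroup F]

theorem map_linearEquiv_addHaar_eq_smul_addHaar (T : E ≃ₗ[ℝ] E) :
    μ.map T = ENNReal.ofReal |LinearMap.det (T : E →ₗ[ℝ] E)|⁻¹ • μ := by
  rw [← abs_inv]
  exact Measure.map_linearMap_addHaar_eq_smul_addHaar μ T.isUnit_det'.ne_zero

theorem ae_comp_linearEquiv_iff (T : E ≃ₗ[ℝ] E) {p : E → Prop} :
    (∀ᵐ z ∂μ, p (T z)) ↔ ∀ᵐ y ∂μ, p y := by
  refine ⟨fun h => ?_,
    (Measure.LinearMap.quasiMeasurePreserving μ (T : E →ₗ[ℝ] E) T.isUnit_det'.ne_zero).ae⟩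
  simpa using (Measure.LinearMap.quasiMeasurePreserving μ (T.symm : E →ₗ[ℝ] E)
    T.symm.isUnit_det'.ne_zero).ae h

theorem integrable_comp_linearEquiv {g : E → F} (hg : Integrable g μ) (T : E ≃ₗ[ℝ] E) :
    Integrable (fun z => g (T z)) μ := by
  have hdet : ENNReal.ofReal |LinearMap.det (T : E →ₗ[ℝ] E)|⁻¹ ≠ 0 := by
    simp [T.isUnit_det'.ne_zero]
  have := (integrable_smul_measure hdet ENNReal.ofReal_ne_top).mpr hg
  rw [← map_linearEquiv_addHaar_eq_smul_addHaar] at this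
  exact (integrable_map_equiv T.toContinuousLinearEquiv.toHomeomorph.toMeasurableEquiv g).mp this

theorem integral_eq_abs_det_smul_integral_comp_linearEquiv [NormedSpace ℝ F] (g : E → F)
    (T : E ≃ₗ[ℝ] E) : ∫ y, g y ∂μ = |LinearMap.det (T : E →ₗ[ℝ] E)| • ∫ z, g (T z) ∂μ := by
  have hdet : |LinearMap.det (T : E →ₗ[ℝ] E)| ≠ 0 := by simp [T.isUnit_det'.ne_zero]
  have := integral_map_equiv (μ := μ) T.toContinuousLinearEquiv.toHomeomorph.toMeasurableEquiv g
  change ∫ y, g y ∂(μ.map T) = ∫ z, g (T z) ∂μ at this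
  rw [map_linearEquiv_addHaar_eq_smul_addHaar, integral_smul_measure,
    ENNReal.toReal_ofReal (by positivity)] at this
  rw [← this, smul_inv_smul₀ hdet]

theorem ae_eq_abs_det_mul_comp_of_forall_integral_comp_symm_mul_eq (T : E ≃ₗ[ℝ] E)
    {g₁ g₂ : E → ℝ} (hg₁ : Integrable g₁ μ) (hg₂ : Integrable g₂ μ)
    (h : ∀ f : E → ℝ, Integrable f μ → ∫ y, f (T.symm y) * g₁ y ∂μ = ∫ y, f y * g₂ y ∂μ) :
    g₂ =ᵐ[μ] fun z => |LinearMap.det (T : E →ₗ[ℝ] E)| * g₁ (T z) := by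
  have hg₁T := (integrable_comp_linearEquiv μ hg₁ T).const_mul |LinearMap.det (T : E →ₗ[ℝ] E)|
  refine (ae_eq_of_forall_integral_mul_eq_s5 hg₁T hg₂ fun f hf => ?_).symm
  rw [← h f hf,
    integral_eq_abs_det_smul_integral_comp_linearEquiv μ (fun y => f (T.symm y) * g₁ y) T,
    smul_eq_mul, ← integral_const_mul]
  simp only [LinearEquiv.symm_apply_apply, mul_left_comm]

end AddHaar

theorem ae_eq_comp_add_nsmul {G β : Type*} [AddMonoid G] [MeasurableSpace G] [MeasurableAdd G]
    {μ : Measure G} [μ.IsAddRightInvariant] {f : G → β} {v : G}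
    (h : ∀ᵐ u ∂μ, f u = f (u + v)) (n : ℕ) : ∀ᵐ u ∂μ, f u = f (u + n • v) := by
  induction n with
  | zero => simp
  | succ n ih =>
    filter_upwards [h, (measurePreserving_add_right μ v).quasiMeasurePreserving.ae ih]
      with u hu hu'
    rw [hu, hu', succ_nsmul', add_assoc]

section CompactSupport

variable {E β : Type*} [NormedAddCommGroup E] [NormedSpace ℝ E] [Zero β] {f : E → β}

theorem HasCompactSupport.exists_nsmul_apply_add_eq_zero (hf : HasCompactSupport f) {v : E}
    (hv : v ≠ 0) : ∃ n : ℕ, ∀ u, f u ≠ 0 → f (u + n • v) = 0 := by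
  obtain ⟨R, hR⟩ := hf.isCompact.isBounded.subset_closedBall 0
  have hbound : ∀ u, f u ≠ 0 → ‖u‖ ≤ R := fun u hu => by
    simpa using hR (subset_tsupport f hu)
  obtain ⟨n, hn⟩ := exists_nat_gt (2 * R / ‖v‖)
  rw [div_lt_iff₀ (norm_pos_iff.mpr hv)] at hn
  refine ⟨n, fun u hu => by_contra fun hun => ?_⟩
  have htri : ‖n • v‖ ≤ ‖u + n • v‖ + ‖u‖ := by
    simpa using norm_sub_le (u + n • v) u
  rw [RCLike.norm_nsmul ℝ, nsmul_eq_mul] at htri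
  linarith [hbound u hu, hbound _ hun]

theorem HasCompactSupport.ae_eq_zero_of_ae_eq_comp_add [MeasurableSpace E] [MeasurableAdd E]
    {μ : Measure E} [μ.IsAddRightInvariant] (hf : HasCompactSupport f) {v : E} (hv : v ≠ 0)
    (h : ∀ᵐ u ∂μ, f u = f (u + v)) : f =ᵐ[μ] 0 := by
  obtain ⟨n, hn⟩ := hf.exists_nsmul_apply_add_eq_zero hv
  filter_upwards [ae_eq_comp_add_nsmul h n] with u hu
  by_contra hu0
  exact hu0 (hu.trans (hn u hu0))

end CompactSupport

/-- Let `λ` be an integrable compactly supported filter which is not zero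
almost everywhere and let `T_g, T_h` be invertible linear maps. If
`𝒯_{T_g} (Λ_λ (𝒯_{T_h} f)) = Λ_λ f` for all locally integrable `f`, then `T_g = T_h⁻¹` and
`λ(y) = |det T_h| · λ(T_h y)` for almost every `y`. -/
theorem single_layer_alignment_conditions {N : ℕ}
    (lam : EuclideanSpace ℝ (Fin N) → ℝ)
    (hlam_int : Integrable lam) (hlam_supp : HasCompactSupport lam)
    (hlam_ne : ¬ lam =ᵐ[volume] 0)
    (Tg Th : EuclideanSpace ℝ (Fin N) ≃ₗ[ℝ] EuclideanSpace ℝ (Fin N))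
    (h : ∀ f : EuclideanSpace ℝ (Fin N) → ℝ, LocallyIntegrable f →
      ∀ x, (∫ y, f (Th.symm y) * lam (Tg.symm x - y)) = ∫ y, f y * lam (x - y)) :
    (∀ x, Tg x = Th.symm x) ∧
    (∀ᵐ y ∂volume, lam y = |LinearMap.det Th.toLinearMap| * lam (Th y)) := by
  set D := |LinearMap.det Th.toLinearMap|
  have hident : ∀ x, (fun z => lam (x - z)) =ᵐ[volume] fun z => D * lam (Tg.symm x - Th z) :=
    fun x => ae_eq_abs_det_mul_comp_of_forall_integral_comp_symm_mul_eq volume Th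
      (hlam_int.comp_sub_left _) (hlam_int.comp_sub_left x) fun f hf => h f hf.locallyIntegrable x
  have hscale : ∀ᵐ y, lam y = D * lam (Th y) := by
    simpa using (Measure.measurePreserving_neg volume).quasiMeasurePreserving.ae (hident 0)
  have hperiodic : ∀ x, ∀ᵐ u, lam u = lam (u + (Th x - Tg.symm x)) := fun x => by
    have hD : D ≠ 0 := by simp [D, Th.isUnit_det'.ne_zero]
    have hcomp : ∀ᵐ w, lam (Tg.symm x - w) = lam (Th x - w) := by
      refine (ae_comp_linearEquiv_iff volume Th).mp ?_
      filter_upwards [hident x,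
        (Measure.measurePreserving_sub_left volume x).quasiMeasurePreserving.ae hscale] with z h1 h2
      rw [map_sub] at h2
      exact mul_left_cancel₀ hD (h1.symm.trans h2)
    filter_upwards
      [(Measure.measurePreserving_sub_left volume (Tg.symm x)).quasiMeasurePreserving.ae hcomp]
      with u hu
    rwa [sub_sub_cancel, sub_sub_eq_add_sub, add_comm (Th x), add_sub_assoc] at hu
  have hTh : ∀ x, Th x = Tg.symm x := fun x => by
    by_contra hne
    exact hlam_ne (hlam_supp.ae_eq_zero_of_ae_eq_comp_add (sub_ne_zero.mpr hne) (hperiodic x))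
  exact ⟨fun x => by simpa using congrArg Tg (hTh (Th.symm x)), hscale⟩
end

section
/- Let T ∈ GL(2, ℝ). If there exist a constant C ∈ ℝ and a measurable λ : ℝ² → ℝ whose support has finite, nonzero Lebesgue measure such that λ(y) = C · λ(T y) for almost every y, then T is conjugate in GL(2, ℝ) to an orthogonal matrix (i.e. there exists B ∈ GL(2, ℝ) such that B T B⁻¹ is a rotation or a reflection matrix). -/
/-!
As `C ≠ 0`, the support `S` of `λ` is invariant under `T` up to null sets, and `0 < |S| < ∞`
forces `|det T| = 1`, so `T` preserves Lebesgue measure. A measure-preserving map cannot push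
almost every point of a set of finite positive measure off to infinity: `S ∩ B_R` and
`S ∩ T⁻ⁿ B_R` have the same measure, and the latter tends to `0`.

A real `2 × 2` matrix with `|det| = 1` is conjugate to a rotation (`det = 1`, `|tr| < 2`), to a
reflection (`det = -1`, `tr = 0`), or is `±1`; otherwise it has a real eigenvalue of modulus
`> 1`, or it is `±(1 + N)` with `N² = 0`, `N ≠ 0`. In the last two cases `Tⁿ x → ∞` for every
`x` off a line.
-/

open MeasureTheory Matrix Filter Bornology Metric Topology

theorem MeasureTheory.MeasurePreserving.measure_eq_zero_of_tendsto_cobounded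
    {X : Type*} [PseudoMetricSpace X] [MeasurableSpace X] [OpensMeasurableSpace X]
    {μ : Measure X} {f : X → X} (hf : MeasurePreserving f μ μ) {s : Set X}
    (hs : MeasurableSet s) (hs_inv : f ⁻¹' s =ᵐ[μ] s) (hs_fin : μ s ≠ ⊤)
    (h_esc : ∀ᵐ x ∂μ, x ∈ s → Tendsto (fun n ↦ f^[n] x) atTop (cobounded X)) :
    μ s = 0 := by
  rcases isEmpty_or_nonempty X with hX | ⟨⟨x₀⟩⟩
  · simp [Set.eq_empty_of_isEmpty s]
  suffices h_ball : ∀ R : ℕ, μ (s ∩ closedBall x₀ R) = 0 by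
    rw [← Set.inter_univ s, ← iUnion_closedBall_nat x₀, Set.inter_iUnion]
    exact measure_iUnion_null h_ball
  intro R
  have h_const (n : ℕ) :
      μ (s ∩ f^[n] ⁻¹' closedBall x₀ R) = μ (s ∩ closedBall x₀ R) :=
    calc μ (s ∩ f^[n] ⁻¹' closedBall x₀ R)
        = μ (f^[n] ⁻¹' (s ∩ closedBall x₀ R)) :=
          measure_congr (((hf.quasiMeasurePreserving.preimage_iterate_ae_eq n hs_inv).symm).inter
            (ae_eq_refl _))
      _ = μ (s ∩ closedBall x₀ R) :=
          (hf.iterate n).measure_preimage (hs.inter measurableSet_closedBall).nullMeasurableSet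
  have h_lim : Tendsto (fun n ↦ μ (s ∩ f^[n] ⁻¹' closedBall x₀ R)) atTop (𝓝 0) := by
    rw [← measure_empty (μ := μ)]
    refine tendsto_measure_of_ae_tendsto_indicator atTop MeasurableSet.empty
      (fun n ↦ hs.inter ((hf.iterate n).measurable measurableSet_closedBall)) hs hs_fin
      (Eventually.of_forall fun n ↦ Set.inter_subset_left) ?_
    filter_upwards [h_esc] with x hx
    by_cases hxs : x ∈ s
    · filter_upwards [hx hxs (isBounded_def.mp (isBounded_closedBall (x := x₀) (r := R)))]
        with n hn
      simpa [hxs] using hn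
    · exact Eventually.of_forall fun n ↦ by simp [hxs]
  simpa [h_const] using h_lim

section LinearMap

variable {E : Type*} [NormedAddCommGroup E] [NormedSpace ℝ E] [MeasurableSpace E] [BorelSpace E]
  [FiniteDimensional ℝ E] (μ : Measure E) [μ.IsAddHaarMeasure] {f : E →ₗ[ℝ] E}

theorem LinearMap.abs_det_eq_one_of_preimage_ae_eq (hf : LinearMap.det f ≠ 0) {s : Set E}
    (hs_inv : f ⁻¹' s =ᵐ[μ] s) (hs_pos : μ s ≠ 0) (hs_fin : μ s ≠ ⊤) :
    |LinearMap.det f| = 1 := by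
  have h := Measure.addHaar_preimage_linearMap μ hf s
  rw [measure_congr hs_inv] at h
  have h_scale : ENNReal.ofReal |(LinearMap.det f)⁻¹| = 1 :=
    (ENNReal.mul_left_inj hs_pos hs_fin).mp (by rw [one_mul, ← h])
  rwa [ENNReal.ofReal_eq_one, abs_inv, inv_eq_one] at h_scale

theorem LinearMap.measurePreserving_of_abs_det_eq_one (hf : |LinearMap.det f| = 1) :
    MeasurePreserving f μ μ := by
  have hf₀ : LinearMap.det f ≠ 0 := fun h ↦ by simp [h] at hf
  refine ⟨f.continuous_of_finiteDimensional.measurable, ?_⟩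
  rw [Measure.map_linearMap_addHaar_eq_smul_addHaar μ hf₀, abs_inv, hf, inv_one,
    ENNReal.ofReal_one, one_smul]

end LinearMap

section Escape

variable {E : Type*} [SeminormedAddCommGroup E] [NormedSpace ℝ E] {f : E → E} {l : ℝ} {x : E}

theorem tendsto_iterate_cobounded_of_map_eq_smul {F : Type*} [SeminormedAddCommGroup F]
    [NormedSpace ℝ F] (φ : E →L[ℝ] F) (hφ : ∀ y, φ (f y) = l • φ y) (hl : 1 < |l|)
    (hx : 0 < ‖φ x‖) :
    Tendsto (fun n ↦ f^[n] x) atTop (cobounded E) := by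
  have h_iter (n : ℕ) : φ (f^[n] x) = l ^ n • φ x := by
    rw [Function.Semiconj.iterate_right hφ n x, smul_iterate_apply]
  have h_image : Tendsto (fun n ↦ φ (f^[n] x)) atTop (cobounded F) := by
    rw [← tendsto_norm_atTop_iff_cobounded]
    simp_rw [h_iter, norm_smul, norm_pow, Real.norm_eq_abs]
    exact (tendsto_pow_atTop_atTop_of_one_lt hl).atTop_mul_const hx
  exact (tendsto_comap_iff.mpr h_image).mono_right φ.lipschitz.comap_cobounded_le

theorem tendsto_iterate_cobounded_of_eq_smul_add (N : E →ₗ[ℝ] E)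
    (hf : ∀ y, f y = l • (y + N y)) (hN : ∀ y, N (N y) = 0) (hl : 1 ≤ |l|) (hx : 0 < ‖N x‖) :
    Tendsto (fun n ↦ f^[n] x) atTop (cobounded E) := by
  have h_iter (n : ℕ) : f^[n] x = l ^ n • (x + (n : ℝ) • N x) := by
    induction n with
    | zero => simp
    | succ n ih =>
      rw [Function.iterate_succ_apply', ih, hf, map_smul, map_add, map_smul, hN]
      push_cast
      module
  have h_lower (n : ℕ) : n * ‖N x‖ - ‖x‖ ≤ ‖f^[n] x‖ :=
    calc n * ‖N x‖ - ‖x‖ = ‖(n : ℝ) • N x‖ - ‖-x‖ := by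
          rw [norm_neg, norm_smul, Real.norm_natCast]
      _ ≤ ‖x + (n : ℝ) • N x‖ := by
          simpa [add_comm] using norm_sub_norm_le ((n : ℝ) • N x) (-x)
      _ ≤ |l| ^ n * ‖x + (n : ℝ) • N x‖ :=
          le_mul_of_one_le_left (norm_nonneg _) (one_le_pow₀ hl)
      _ = ‖f^[n] x‖ := by rw [h_iter, norm_smul, norm_pow, Real.norm_eq_abs]
  rw [← tendsto_norm_atTop_iff_cobounded]
  exact tendsto_atTop_mono h_lower
    (tendsto_atTop_add_const_right _ _ (tendsto_natCast_atTop_atTop.atTop_mul_const hx))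

end Escape

theorem exists_one_lt_abs_root {t d : ℝ} (h : 1 + d < |t|) :
    ∃ l : ℝ, 1 < |l| ∧ l ^ 2 - t * l + d = 0 := by
  have hD : 0 ≤ t ^ 2 - 4 * d := by
    rcases le_or_gt d 0 with hd | hd
    · nlinarith
    · nlinarith [sq_abs t, sq_nonneg (1 - d), mul_self_lt_mul_self (by linarith) h]
  set s := √(t ^ 2 - 4 * d)
  have hs : s ^ 2 = t ^ 2 - 4 * d := Real.sq_sqrt hD
  have hs_big : 2 - |t| < s := by nlinarith [Real.sqrt_nonneg (t ^ 2 - 4 * d), sq_abs t]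
  rcases le_or_gt 0 t with ht | ht
  · rw [abs_of_nonneg ht] at hs_big
    exact ⟨(t + s) / 2, by rw [lt_abs]; left; linarith, by linear_combination hs / 4⟩
  · rw [abs_of_neg ht] at hs_big
    exact ⟨(t - s) / 2, by rw [lt_abs]; right; linarith, by linear_combination hs / 4⟩

theorem rotation_mem_orthogonalGroup {c s : ℝ} (h : c ^ 2 + s ^ 2 = 1) :
    !![c, -s; s, c] ∈ orthogonalGroup (Fin 2) ℝ := by
  rw [mem_orthogonalGroup_iff, ← Matrix.ext_iff]
  intro i j
  fin_cases i <;> fin_cases j <;> simp [mul_apply] <;> linarith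

theorem reflection_mem_orthogonalGroup {c s : ℝ} (h : c ^ 2 + s ^ 2 = 1) :
    !![c, s; s, -c] ∈ orthogonalGroup (Fin 2) ℝ := by
  rw [mem_orthogonalGroup_iff, ← Matrix.ext_iff]
  intro i j
  fin_cases i <;> fin_cases j <;> simp [mul_apply] <;> linarith

theorem Matrix.GeneralLinearGroup.exists_conj_eq_of_mul_eq_mul {n R : Type*} [Fintype n]
    [DecidableEq n] [CommRing R] (T : GL n R) {P Q : Matrix n n R} (hP : IsUnit P.det)
    (h : (T : Matrix n n R) * P = P * Q) :
    ∃ B : GL n R, ((B * T * B⁻¹ : GL n R) : Matrix n n R) = Q := by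
  set U := nonsingInvUnit P hP
  have hU : (U : Matrix n n R) = P := rfl
  refine ⟨U⁻¹, ?_⟩
  rw [inv_inv, Units.val_mul, Units.val_mul, hU, mul_assoc, h, ← mul_assoc, ← hU, Units.inv_mul,
    one_mul]

theorem Matrix.ae_of_forall_mulVec_ne_zero {n : Type*} [Fintype n] [DecidableEq n]
    {A : Matrix n n ℝ} (hA : A ≠ 0) {p : (n → ℝ) → Prop} (h : ∀ x, A *ᵥ x ≠ 0 → p x) :
    ∀ᵐ x, p x := by
  have hker : LinearMap.ker A.mulVecLin ≠ ⊤ := by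
    rwa [Ne, LinearMap.ker_eq_top, ← toLin'_apply', LinearEquiv.map_eq_zero_iff]
  refine measure_mono_null (fun x hx ↦ ?_) (Measure.addHaar_submodule volume _ hker)
  by_contra hx'
  exact hx (h x hx')

theorem Matrix.sq_sub_trace_smul_add_det_smul {R : Type*} [CommRing R] [Nontrivial R]
    (M : Matrix (Fin 2) (Fin 2) R) : M ^ 2 - M.trace • M + M.det • 1 = 0 := by
  simpa [charpoly_fin_two, Algebra.smul_def] using M.aeval_self_charpoly

namespace Matrix

variable (M : Matrix (Fin 2) (Fin 2) ℝ)

theorem exists_conj_rotation (hdet : M.det = 1) (htr : |M.trace| < 2) :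
    ∃ P R : Matrix (Fin 2) (Fin 2) ℝ,
      P.det ≠ 0 ∧ M * P = P * R ∧ R ∈ orthogonalGroup (Fin 2) ℝ := by
  rw [det_fin_two] at hdet
  obtain ⟨htr₁, htr₂⟩ := abs_lt.mp htr
  rw [trace_fin_two] at htr₁ htr₂
  set c := (M 0 0 + M 1 1) / 2 with hc
  have hc_lt : c ^ 2 < 1 := by nlinarith
  set s := √(1 - c ^ 2)
  have hs : s ^ 2 = 1 - c ^ 2 := Real.sq_sqrt (by linarith)
  have hs_pos : 0 < s := Real.sqrt_pos.mpr (by linarith)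
  have hM10 : M 1 0 ≠ 0 := by
    intro h0
    rw [h0, mul_zero, sub_zero] at hdet
    nlinarith [sq_nonneg (M 0 0 - M 1 1)]
  -- the columns of `P` are `s e₀` and `(M - c) e₀`
  refine ⟨!![s, M 0 0 - c; 0, M 1 0], !![c, -s; s, c], ?_, ?_,
    rotation_mem_orthogonalGroup (by linarith)⟩
  · simp [det_fin_two, hs_pos.ne', hM10]
  · ext i j
    fin_cases i <;> fin_cases j <;> simp [mul_apply]
    · ring
    · linear_combination hs - hdet - 2 * M 0 0 * hc
    · linear_combination -2 * M 1 0 * hc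

theorem exists_conj_reflection (hdet : M.det = -1) (htr : M.trace = 0) :
    ∃ P R : Matrix (Fin 2) (Fin 2) ℝ,
      P.det ≠ 0 ∧ M * P = P * R ∧ R ∈ orthogonalGroup (Fin 2) ℝ := by
  have hM_sq : M ^ 2 = 1 := by
    simpa [htr, hdet, ← sub_eq_add_neg, sub_eq_zero] using M.sq_sub_trace_smul_add_det_smul
  obtain ⟨e, he, hae⟩ : ∃ e : ℝ, e ^ 2 = 1 ∧ M 0 0 * e ≠ -1 := by
    by_cases h : M 0 0 = -1
    · exact ⟨-1, by norm_num, by rw [h]; norm_num⟩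
    · exact ⟨1, by norm_num, by rwa [mul_one]⟩
  have hR_sq : !![e, 0; 0, -e] ^ 2 = 1 := by
    rw [sq, mul_fin_two, one_fin_two]
    simp [← sq, he]
  -- both `M` and `R` are involutions, so `M * (M + R) = 1 + M * R = (M + R) * R`
  refine ⟨M + !![e, 0; 0, -e], !![e, 0; 0, -e], ?_, ?_,
    reflection_mem_orthogonalGroup (by simpa using he)⟩
  · rw [det_fin_two] at hdet ⊢
    rw [trace_fin_two] at htr
    simp only [add_apply, of_apply, cons_val', cons_val_zero, cons_val_one, empty_val',
      cons_val_fin_one]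
    intro h
    exact hae (by linear_combination (-1 / 2 : ℝ) * (h - hdet + he - e * htr))
  · rw [mul_add, add_mul, ← sq, hM_sq, ← sq, hR_sq, add_comm]

theorem ae_tendsto_cobounded_of_ne_smul_one (hdet : M.det = 1) {l : ℝ} (hl : l ^ 2 = 1)
    (htr : M.trace = 2 * l) (hM : M ≠ l • 1) :
    ∀ᵐ x, Tendsto (fun n ↦ (M *ᵥ ·)^[n] x) atTop (cobounded (Fin 2 → ℝ)) := by
  set N := l • M - 1
  have hM_eq : M = l • (1 + N) := by rw [add_sub_cancel, smul_smul, ← sq, hl, one_smul]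
  have hN_sq : N * N = 0 := by
    have h := M.sq_sub_trace_smul_add_det_smul
    rw [htr, hdet] at h
    calc N * N = l ^ 2 • M ^ 2 - (2 * l) • M + 1 := by
          simp only [N, sub_mul, mul_sub, smul_mul_assoc, mul_smul_comm, one_mul, mul_one, sq]
          module
      _ = 0 := by rw [hl, one_smul, ← h, one_smul]
  have hN : N ≠ 0 := fun h ↦ hM (by rw [hM_eq, h, add_zero])
  refine ae_of_forall_mulVec_ne_zero hN fun x hx ↦
    tendsto_iterate_cobounded_of_eq_smul_add N.mulVecLin (fun y ↦ ?_) (fun y ↦ ?_)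
      (by nlinarith [sq_abs l, abs_nonneg l]) (norm_pos_iff.mpr hx)
  · change M *ᵥ y = l • (y + N *ᵥ y)
    conv_lhs => rw [hM_eq]
    rw [smul_mulVec, add_mulVec, one_mulVec]
  · change N *ᵥ (N *ᵥ y) = 0
    rw [mulVec_mulVec, hN_sq, zero_mulVec]

theorem ae_tendsto_cobounded_of_one_lt_abs_root (hdet : |M.det| = 1) {l : ℝ} (hl : 1 < |l|)
    (hroot : l ^ 2 - M.trace * l + M.det = 0) :
    ∀ᵐ x, Tendsto (fun n ↦ (M *ᵥ ·)^[n] x) atTop (cobounded (Fin 2 → ℝ)) := by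
  -- `M - l'` with `l'` the other root maps onto the `l`-eigenline
  set N := M - (M.trace - l) • 1
  have hNM : N * M = l • N := by
    rw [← sub_eq_zero, ← M.sq_sub_trace_smul_add_det_smul,
      show M.det = l * (M.trace - l) by linear_combination hroot]
    simp only [N, sub_mul, smul_mul_assoc, one_mul, smul_sub, smul_smul, sq]
    module
  have hN : N ≠ 0 := by
    intro h
    have hM : M = (M.trace - l) • 1 := sub_eq_zero.mp h
    have htr := congrArg trace hM
    have hd := congrArg det hM
    simp only [trace_smul, trace_one, Fintype.card_fin, det_smul, det_one, smul_eq_mul,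
      Nat.cast_ofNat, mul_one] at htr hd
    have : |l| ^ 2 = 1 := by rw [← hdet, hd, show M.trace - l = l by linarith, abs_pow]
    nlinarith
  refine ae_of_forall_mulVec_ne_zero hN fun x hx ↦
    tendsto_iterate_cobounded_of_map_eq_smul (LinearMap.toContinuousLinearMap N.mulVecLin)
      (fun y ↦ ?_) hl (norm_pos_iff.mpr hx)
  change N *ᵥ (M *ᵥ y) = l • (N *ᵥ y)
  rw [mulVec_mulVec, hNM, smul_mulVec]

theorem conj_orthogonal_or_ae_tendsto_cobounded (hdet : |M.det| = 1) :
    (∃ P R : Matrix (Fin 2) (Fin 2) ℝ,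
      P.det ≠ 0 ∧ M * P = P * R ∧ R ∈ orthogonalGroup (Fin 2) ℝ) ∨
    ∀ᵐ x, Tendsto (fun n ↦ (M *ᵥ ·)^[n] x) atTop (cobounded (Fin 2 → ℝ)) := by
  have h_hyperbolic (h : 1 + M.det < |M.trace|) :
      ∀ᵐ x, Tendsto (fun n ↦ (M *ᵥ ·)^[n] x) atTop (cobounded (Fin 2 → ℝ)) :=
    let ⟨_, hl, hroot⟩ := exists_one_lt_abs_root h
    M.ae_tendsto_cobounded_of_one_lt_abs_root hdet hl hroot
  rcases (abs_eq zero_le_one).mp hdet with hd | hd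
  · rcases lt_trichotomy |M.trace| 2 with htr | htr | htr
    · exact Or.inl (M.exists_conj_rotation hd htr)
    · have hl : (M.trace / 2) ^ 2 = 1 := by rw [div_pow, ← sq_abs, htr]; norm_num
      by_cases hM : M = (M.trace / 2) • 1
      · refine Or.inl ⟨1, M, by simp, by simp, ?_⟩
        rw [hM]
        simp [mem_orthogonalGroup_iff, ← sq, _root_.smul_pow, hl]
      · exact Or.inr (M.ae_tendsto_cobounded_of_ne_smul_one hd hl (by ring) hM)
    · exact Or.inr (h_hyperbolic (by rw [hd]; linarith))
  · rcases eq_or_ne M.trace 0 with htr | htr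
    · exact Or.inl (M.exists_conj_reflection hd htr)
    · exact Or.inr (h_hyperbolic (by rw [hd]; simpa using htr))

end Matrix

/-- Let `T ∈ GL(2, ℝ)`. If there exist a constant `C ∈ ℝ` and a measurable
`λ : ℝ² → ℝ` whose support has finite, nonzero Lebesgue measure such that
`λ(y) = C · λ(T y)` for almost every `y`, then `T` is conjugate in `GL(2, ℝ)` to an
orthogonal matrix. -/
theorem invariant_filter_implies_conjugate_to_orthogonal
    (T : Matrix.GeneralLinearGroup (Fin 2) ℝ)
    (h : ∃ (C : ℝ) (lam : (Fin 2 → ℝ) → ℝ), Measurable lam ∧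
      volume (Function.support lam) ≠ 0 ∧
      volume (Function.support lam) < ⊤ ∧
      (∀ᵐ y ∂volume, lam y = C * lam ((T : Matrix (Fin 2) (Fin 2) ℝ) *ᵥ y))) :
    ∃ B : Matrix.GeneralLinearGroup (Fin 2) ℝ,
      ((B * T * B⁻¹ : Matrix.GeneralLinearGroup (Fin 2) ℝ) : Matrix (Fin 2) (Fin 2) ℝ) ∈
        Matrix.orthogonalGroup (Fin 2) ℝ := by
  obtain ⟨C, lam, h_meas, h_pos, h_fin, h_eq⟩ := h
  set M : Matrix (Fin 2) (Fin 2) ℝ := (T : Matrix (Fin 2) (Fin 2) ℝ)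
  have hC : C ≠ 0 := by
    rintro rfl
    exact h_pos ((Measure.measure_support_eq_zero_iff _).mpr (h_eq.mono fun y hy ↦ by simp [hy]))
  have h_inv : M.mulVecLin ⁻¹' Function.support lam =ᵐ[volume] Function.support lam :=
    eventuallyEq_set.mpr (h_eq.mono fun y hy ↦ by simp [hy, hC])
  have h_det_eq : LinearMap.det M.mulVecLin = M.det := by
    rw [← toLin'_apply', LinearMap.det_toLin']
  have h_det : |M.det| = 1 := by
    rw [← h_det_eq]
    exact LinearMap.abs_det_eq_one_of_preimage_ae_eq volume
      (h_det_eq ▸ (isUnits_det_units T).ne_zero) h_inv h_pos h_fin.ne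
  have h_mp := LinearMap.measurePreserving_of_abs_det_eq_one volume (h_det_eq ▸ h_det)
  rcases M.conj_orthogonal_or_ae_tendsto_cobounded h_det with ⟨P, R, hP, hMP, hR⟩ | h_esc
  · obtain ⟨B, hB⟩ := T.exists_conj_eq_of_mul_eq_mul hP.isUnit hMP
    exact ⟨B, hB ▸ hR⟩
  · exact absurd (h_mp.measure_eq_zero_of_tendsto_cobounded (measurableSet_support h_meas) h_inv
      h_fin.ne (h_esc.mono fun x hx _ ↦ hx)) h_pos
end

section
/- A convolutional layer preserves translation covariance and semi-locality: let Λ₁, …, Λ_M be operators on locally integrable functions ℝ^N → ℝ, each translation covariant and semi-local with radius R_m, let λ₁, …, λ_M : ℝ^N → ℝ be integrable filters with λ_m supported in the closed ball of radius r_m around the origin, let b ∈ ℝ and let σ : ℝ → ℝ. Then the operator Θ defined by (Θ f)(x) = σ( Σ_{m=1}^{M} ((Λ_m f) ⋆ λ_m)(x) + b ) is translation covariant and semi-local with radius max_m (R_m + r_m). -/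
open MeasureTheory

/-- An operator `Λ` on functions `ℝ^N → ℝ` is translation covariant if
`Λ (D_δ f) = D_δ (Λ f)` for all `δ` and `f`, where `(D_δ f)(x) = f(x − δ)`. -/
def TranslationCovariant {N : ℕ}
    (Lam : (EuclideanSpace ℝ (Fin N) → ℝ) → (EuclideanSpace ℝ (Fin N) → ℝ)) : Prop :=
  ∀ (δ : EuclideanSpace ℝ (Fin N)) (f : EuclideanSpace ℝ (Fin N) → ℝ),
    Lam (fun y => f (y - δ)) = fun x => Lam f (x - δ)

/-- An operator `Λ` is semi-local with radius `r` if for every point `p` and all `f₁, f₂`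
agreeing on the ball of radius `r` around `p`, `(Λ f₁)(p) = (Λ f₂)(p)`. -/
def SemiLocal {N : ℕ}
    (Lam : (EuclideanSpace ℝ (Fin N) → ℝ) → (EuclideanSpace ℝ (Fin N) → ℝ)) (r : ℝ) : Prop :=
  ∀ (p : EuclideanSpace ℝ (Fin N)) (f₁ f₂ : EuclideanSpace ℝ (Fin N) → ℝ),
    (∀ x ∈ Metric.closedBall p r, f₁ x = f₂ x) → Lam f₁ p = Lam f₂ p

/-- A convolutional layer preserves translation covariance and
semi-locality: if `Λ₁, …, Λ_M` are translation-covariant operators, each semi-local with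
radius `R m`, the filters `λ_m` are integrable and supported in the closed ball of radius
`r m` around the origin, `b ∈ ℝ` is a bias and `σ : ℝ → ℝ` a pointwise non-linearity, then
`(Θ f)(x) = σ (Σ_m ((Λ_m f) ⋆ λ_m)(x) + b)` is translation covariant and semi-local with
radius `max_m (R m + r m)`. -/
theorem conv_layer_preserves_translation_covariance_and_semi_locality {N M : ℕ}
    (hM : 0 < M)
    (Lam : Fin M → (EuclideanSpace ℝ (Fin N) → ℝ) → (EuclideanSpace ℝ (Fin N) → ℝ))
    (R : Fin M → ℝ)
    (hcov : ∀ m, TranslationCovariant (Lam m))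
    (hloc : ∀ m, SemiLocal (Lam m) (R m))
    (lam : Fin M → EuclideanSpace ℝ (Fin N) → ℝ) (r : Fin M → ℝ)
    (hlam_int : ∀ m, Integrable (lam m))
    (hlam_supp : ∀ m, Function.support (lam m) ⊆ Metric.closedBall 0 (r m))
    (b : ℝ) (σ : ℝ → ℝ) :
    TranslationCovariant
      (fun f => fun x => σ ((∑ m, ∫ y, Lam m f y * lam m (x - y)) + b)) ∧
    SemiLocal
      (fun f => fun x => σ ((∑ m, ∫ y, Lam m f y * lam m (x - y)) + b))
      (⨆ m, (R m + r m)) := by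
  constructor
  · intro δ f
    funext x
    simp only
    congr 2
    refine Finset.sum_congr rfl fun m _ => ?_
    rw [hcov m δ f]
    have h := MeasureTheory.integral_sub_right_eq_self (μ := volume)
      (fun z => Lam m f z * lam m ((x - δ) - z)) δ
    simp only [sub_sub_sub_cancel_right] at h
    exact h
  · intro p f₁ f₂ hagree
    simp only
    congr 2
    refine Finset.sum_congr rfl fun m _ => ?_
    refine integral_congr_ae (Filter.Eventually.of_forall fun y => ?_)
    by_cases hy : lam m (p - y) = 0
    · simp [hy]
    · have hmem : p - y ∈ Metric.closedBall (0 : EuclideanSpace ℝ (Fin N)) (r m) :=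
        hlam_supp m hy
      have hdist : dist y p ≤ r m := by
        rw [Metric.mem_closedBall, dist_zero_right] at hmem
        rw [dist_comm, dist_eq_norm]
        simpa using hmem
      have hkey : Lam m f₁ y = Lam m f₂ y := by
        refine hloc m y f₁ f₂ fun z hz => ?_
        refine hagree z ?_
        have hsup : R m + r m ≤ ⨆ m, (R m + r m) := by
          have : Nonempty (Fin M) := ⟨⟨0, hM⟩⟩
          exact le_ciSup (f := fun m => R m + r m) (Set.Finite.bddAbove (Set.finite_range _)) m
        have : dist z p ≤ R m + r m :=
          (dist_triangle z y p).trans (add_le_add (Metric.mem_closedBall.mp hz) hdist)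
        exact Metric.mem_closedBall.mpr (this.trans hsup)
      simp only [hkey]
end

section
/- Let Λ₁ and Λ₂ be operators on functions ℝ^N → ℝ, each translation covariant, semi-local (with some radii r(Λ₁), r(Λ₂)) and non-constant (there exists f with Λ_i f ≠ Λ_i 0), and let T : ℝ^N → ℝ^N be an invertible linear map. If Λ₁ f = 𝒯_T (Λ₂ f) for all f, i.e. (Λ₁ f)(x) = (Λ₂ f)(T⁻¹ x) for all f and all x, then T is the identity map. -/
/-- Let `Λ₁, Λ₂` be translation-covariant, semi-local (with some radii),
non-constant operators, and let `T` be an invertible linear map. If `Λ₁ f = 𝒯_T (Λ₂ f)`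
for all `f`, i.e. `(Λ₁ f)(x) = (Λ₂ f)(T⁻¹ x)` for all `f` and `x`, then `T` is the
identity map. -/
theorem multilayer_noRot {N : ℕ}
    (Lam₁ Lam₂ : (EuclideanSpace ℝ (Fin N) → ℝ) → (EuclideanSpace ℝ (Fin N) → ℝ))
    (hcov₁ : TranslationCovariant Lam₁) (hcov₂ : TranslationCovariant Lam₂)
    (r₁ r₂ : ℝ) (hloc₁ : SemiLocal Lam₁ r₁) (hloc₂ : SemiLocal Lam₂ r₂)
    (hnc₁ : ∃ f, Lam₁ f ≠ Lam₁ 0) (hnc₂ : ∃ f, Lam₂ f ≠ Lam₂ 0)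
    (T : EuclideanSpace ℝ (Fin N) ≃ₗ[ℝ] EuclideanSpace ℝ (Fin N))
    (h : ∀ (f : EuclideanSpace ℝ (Fin N) → ℝ) (x : EuclideanSpace ℝ (Fin N)),
      Lam₁ f x = Lam₂ f (T.symm x)) :
    ∀ x, T x = x := by
  -- Key identity: Λ₂ f (q - δ) = Λ₂ f (q - T.symm δ)
  have key : ∀ (f : EuclideanSpace ℝ (Fin N) → ℝ) (q δ : EuclideanSpace ℝ (Fin N)),
      Lam₂ f (q - δ) = Lam₂ f (q - T.symm δ) := by
    intro f q δ
    have h1 : Lam₂ (fun y => f (y - δ)) q = Lam₂ f (q - δ) :=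
      congrFun (hcov₂ δ f) q
    have h5 : T.symm (T q) = q := T.symm_apply_apply q
    have h2 : Lam₁ (fun y => f (y - δ)) (T q) = Lam₂ (fun y => f (y - δ)) q := by
      rw [h _ (T q), h5]
    have h3 : Lam₁ (fun y => f (y - δ)) (T q) = Lam₁ f (T q - δ) :=
      congrFun (hcov₁ δ f) (T q)
    have h6 : T.symm (T q - δ) = q - T.symm δ := by
      rw [map_sub, h5]
    have h4 : Lam₁ f (T q - δ) = Lam₂ f (q - T.symm δ) := by
      rw [h f (T q - δ), h6]
    rw [← h1, ← h2, h3, h4]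
  -- Periodicity: for w = T.symm δ - δ, Λ₂ g (p + w) = Λ₂ g p
  have per : ∀ (g : EuclideanSpace ℝ (Fin N) → ℝ) (p δ : EuclideanSpace ℝ (Fin N)),
      Lam₂ g (p + (T.symm δ - δ)) = Lam₂ g p := by
    intro g p δ
    have := key g (p + T.symm δ) δ
    have e1 : p + T.symm δ - δ = p + (T.symm δ - δ) := by abel
    have e2 : p + T.symm δ - T.symm δ = p := by abel
    rw [e1, e2] at this
    exact this
  classical
  by_contra hx
  push_neg at hx
  obtain ⟨x₀, hx₀⟩ := hx
  -- δ₀ with T.symm δ₀ ≠ δ₀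
  set δ₀ : EuclideanSpace ℝ (Fin N) := T x₀ with hδ₀
  have hv : T.symm δ₀ - δ₀ ≠ 0 := by
    rw [hδ₀, T.symm_apply_apply]
    intro hc
    exact hx₀ (by rw [← sub_eq_zero]; simpa [neg_sub] using (neg_eq_zero.mpr hc))
  set v : EuclideanSpace ℝ (Fin N) := T.symm δ₀ - δ₀ with hvdef
  have hvn : (0:ℝ) < ‖v‖ := norm_pos_iff.mpr hv
  set t : ℝ := (2 * |r₂| + 1) / ‖v‖ with ht
  have htpos : 0 < t := div_pos (by positivity) hvn
  set w : EuclideanSpace ℝ (Fin N) := t • v with hw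
  have hwnorm : ‖w‖ = 2 * |r₂| + 1 := by
    rw [hw, norm_smul, Real.norm_eq_abs, abs_of_pos htpos, ht,
      div_mul_cancel₀ _ (ne_of_gt hvn)]
  have hwper : w = T.symm (t • δ₀) - (t • δ₀) := by
    rw [hw, hvdef, map_smul, smul_sub]
  obtain ⟨f, hf⟩ := hnc₂
  obtain ⟨p, hp⟩ := Function.ne_iff.mp hf
  -- truncated function
  set f' : EuclideanSpace ℝ (Fin N) → ℝ :=
    fun x => if x ∈ Metric.closedBall p r₂ then f x else 0 with hf'
  have e1 : Lam₂ f' p = Lam₂ f p := by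
    apply hloc₂
    intro x hxb
    simp only [hf', if_pos hxb]
  have e2 : Lam₂ f' (p + w) = Lam₂ 0 (p + w) := by
    apply hloc₂
    intro x hxb
    have hdx : dist x (p + w) ≤ r₂ := Metric.mem_closedBall.mp hxb
    have hdp : dist (p + w) p = ‖w‖ := by
      simp [dist_eq_norm]
    have hfar : ¬ x ∈ Metric.closedBall p r₂ := by
      intro hxin
      have hdp2 : dist x p ≤ r₂ := Metric.mem_closedBall.mp hxin
      have : dist (p + w) p ≤ dist (p + w) x + dist x p := dist_triangle _ _ _
      rw [hdp, hwnorm, dist_comm (p+w) x] at this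
      have hr : r₂ ≤ |r₂| := le_abs_self r₂
      linarith
    simp only [hf', if_neg hfar, Pi.zero_apply]
  have e3 : Lam₂ f' (p + w) = Lam₂ f' p := by
    rw [hwper]; exact per f' p (t • δ₀)
  have e4 : Lam₂ 0 (p + w) = Lam₂ 0 p := by
    rw [hwper]; exact per 0 p (t • δ₀)
  exact hp (by rw [← e1, ← e3, e2, e4])
end

section
/- Let Λ be a translation-covariant, semi-local, non-constant operator on functions ℝ^N → ℝ with generator μ(f) := (Λ f)(0), and let T_g, T_h : ℝ^N → ℝ^N be invertible linear maps. If 𝒯_{T_g} (Λ (𝒯_{T_h} f)) = Λ f for all f, then T_g = T_h⁻¹ and the generator is invariant: μ(f ∘ T_h⁻¹) = μ(f) for all f. -/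
/-- Let `Λ` be a translation-covariant, semi-local, non-constant operator
with generator `μ(f) := (Λ f)(0)`, and let `T_g, T_h` be invertible linear maps. If
`𝒯_{T_g} (Λ (𝒯_{T_h} f)) = Λ f` for all `f`, then `T_g = T_h⁻¹` and the generator is
invariant: `μ(f ∘ T_h⁻¹) = μ(f)` for all `f`. -/
theorem multilayer_alignment_conditions {N : ℕ}
    (Lam : (EuclideanSpace ℝ (Fin N) → ℝ) → (EuclideanSpace ℝ (Fin N) → ℝ))
    (hcov : TranslationCovariant Lam)
    (r : ℝ) (hloc : SemiLocal Lam r)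
    (hnc : ∃ f, Lam f ≠ Lam 0)
    (μ : (EuclideanSpace ℝ (Fin N) → ℝ) → ℝ) (hμ : ∀ f, μ f = Lam f 0)
    (Tg Th : EuclideanSpace ℝ (Fin N) ≃ₗ[ℝ] EuclideanSpace ℝ (Fin N))
    (h : ∀ (f : EuclideanSpace ℝ (Fin N) → ℝ) (x : EuclideanSpace ℝ (Fin N)),
      Lam (fun y => f (Th.symm y)) (Tg.symm x) = Lam f x) :
    (∀ x, Tg x = Th.symm x) ∧
    (∀ f : EuclideanSpace ℝ (Fin N) → ℝ, μ (fun y => f (Th.symm y)) = μ f) := by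
  have key : ∀ (g : EuclideanSpace ℝ (Fin N) → ℝ) (δ z : EuclideanSpace ℝ (Fin N)),
      Lam g (z - Th δ) = Lam g (z - Tg.symm δ) := by
    intro g δ z
    have hx := h (fun y => g (Th (y - δ))) (Tg z)
    have e1 : (fun y => g (Th (Th.symm y - δ))) = fun y => g (y - Th δ) := by
      funext y; rw [map_sub, Th.apply_symm_apply]
    rw [show (fun y => (fun y => g (Th (y - δ))) (Th.symm y)) = fun y => g (Th (Th.symm y - δ))
        from rfl, e1, Tg.symm_apply_apply] at hx
    have e2 : Lam (fun y => g (y - Th δ)) z = Lam g (z - Th δ) := by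
      rw [hcov (Th δ) g]
    have e3 : Lam (fun y => g (Th (y - δ))) (Tg z) = Lam (fun y => g (Th y)) (Tg z - δ) := by
      rw [hcov δ (fun y => g (Th y))]
    have hx2 := h (fun y => g (Th y)) (Tg z - δ)
    have e4 : (fun y => g (Th (Th.symm y))) = g := by
      funext y; rw [Th.apply_symm_apply]
    rw [show (fun y => (fun y => g (Th y)) (Th.symm y)) = fun y => g (Th (Th.symm y)) from rfl,
        e4, map_sub, Tg.symm_apply_apply] at hx2
    rw [e3, ← hx2] at hx
    rw [← e2]; exact hx
  have hTgTh : ∀ δ, Tg.symm δ = Th δ := by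
    intro δ
    by_contra hne
    have hv0 : Tg.symm δ - Th δ ≠ 0 := sub_ne_zero.mpr hne
    set v : EuclideanSpace ℝ (Fin N) := Tg.symm δ - Th δ with hv
    have per : ∀ (g : EuclideanSpace ℝ (Fin N) → ℝ) (w : EuclideanSpace ℝ (Fin N)),
        Lam g (w + v) = Lam g w := by
      intro g w
      have := key g δ (w + Tg.symm δ)
      have e1 : w + Tg.symm δ - Th δ = w + v := by rw [hv]; abel
      have e2 : w + Tg.symm δ - Tg.symm δ = w := by abel
      rw [e1, e2] at this
      exact this
    have pern : ∀ (g : EuclideanSpace ℝ (Fin N) → ℝ) (w : EuclideanSpace ℝ (Fin N)) (n : ℕ),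
        Lam g (w + (n : ℝ) • v) = Lam g w := by
      intro g w n
      induction n with
      | zero => simp
      | succ k ih =>
        have e : w + ((k + 1 : ℕ) : ℝ) • v = (w + (k : ℝ) • v) + v := by
          push_cast; rw [add_smul, one_smul]; abel
        rw [e, per, ih]
    have hconst : ∀ g, Lam g = Lam 0 := by
      intro g
      funext p
      have hvpos : (0 : ℝ) < ‖v‖ := norm_pos_iff.mpr hv0
      obtain ⟨n, hn⟩ := exists_nat_gt (2 * r / ‖v‖)
      have hnv : 2 * r < (n : ℝ) * ‖v‖ := by
        calc 2 * r = (2 * r / ‖v‖) * ‖v‖ := by field_simp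
        _ < (n : ℝ) * ‖v‖ := by exact mul_lt_mul_of_pos_right hn hvpos
      set c : EuclideanSpace ℝ (Fin N) := (n : ℝ) • v with hc
      set g' : EuclideanSpace ℝ (Fin N) → ℝ := fun x => if dist x p ≤ r then g x else 0
        with hg'
      have h1 : Lam g p = Lam g' p := by
        apply hloc
        intro x hx
        rw [Metric.mem_closedBall] at hx
        simp [hg', hx]
      have h2 : Lam g' (p + c) = Lam g' p := pern g' p n
      have h3 : Lam (fun y => g' (y + c)) p = Lam g' (p + c) := by
        have := congrFun (hcov (-c) g') p
        simpa [sub_neg_eq_add] using this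
      have h4 : Lam (fun y => g' (y + c)) p = Lam 0 p := by
        apply hloc
        intro x hx
        rw [Metric.mem_closedBall] at hx
        have hnorm : ‖c‖ = (n : ℝ) * ‖v‖ := by
          rw [hc, norm_smul, Real.norm_natCast]
        have hdx : dist x p = ‖x - p‖ := dist_eq_norm x p
        have hd2 : dist (x + c) p = ‖x + c - p‖ := dist_eq_norm _ _
        have htri : ‖c‖ ≤ ‖x + c - p‖ + ‖x - p‖ := by
          have : c = (x + c - p) - (x - p) := by abel
          calc ‖c‖ = ‖(x + c - p) - (x - p)‖ := by rw [← this]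
          _ ≤ ‖x + c - p‖ + ‖x - p‖ := norm_sub_le _ _
        have hgt : ¬ dist (x + c) p ≤ r := by
          rw [hd2]
          rw [hdx] at hx
          nlinarith
        simp [hg', hgt]
      rw [h1, ← h2, ← h3, h4]
    obtain ⟨f0, hf0⟩ := hnc
    exact hf0 (hconst f0)
  constructor
  · intro x
    have := hTgTh (Th.symm x)
    rw [Th.apply_symm_apply] at this
    exact ((Tg.symm_apply_eq).mp this).symm
  · intro f
    rw [hμ, hμ]
    have := h f 0
    rwa [map_zero] at this
end

section
/- Let T be an invertible N×N real matrix having at least one (possibly complex) eigenvalue of modulus different from 1, let r > 0, let B be the closed ball of radius r around the origin in ℝ^N with indicator function χ, and let μ be a real-valued functional on bounded measurable functions ℝ^N → ℝ satisfying: (i) semi-locality, μ(f) = μ(χ · f) for all f; (ii) invariance, μ(f ∘ T⁻¹) = μ(f) for all f; (iii) continuity, whenever (fₙ) is a uniformly bounded sequence of measurable functions supported in B with ∫ |fₙ| → 0, then μ(fₙ) → μ(0). Then μ is constant: μ(f) = μ(0) for every bounded measurable f. -/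
/-!
An eigenvalue `z` of `T` with `‖z‖ ≠ 1` yields, from the real or imaginary part of a left
eigenvector of `T` (if `‖z‖ < 1`) or of `T⁻¹` (if `‖z‖ > 1`), a nonzero real covector `a` and a
matrix `Q ∈ {T, T⁻¹}` with `a Qᵏ → 0`, while `μ` is invariant under `P = Q⁻¹`. For bounded
measurable `f`, semi-locality and invariance give `μ (χ · ((χ · f) ∘ Pᵏ)) = μ f` for every `k`. But
this function is supported where `x ∈ B` and `Pᵏ x ∈ B`, which forces `|a ⬝ x| ≤ ‖a Qᵏ‖₁ r`.
These slabs of `B` shrink to the null hyperplane `a ⬝ x = 0`, so the `L¹` norms tend to `0` and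
continuity gives `μ f = μ 0`.
-/

open MeasureTheory Matrix Filter Topology Set

namespace Matrix

variable {n : Type*} [Fintype n]

theorem comp_vecMul_map_algebraMap {K L : Type*} [CommRing K] [CommRing L] [Algebra K L]
    (ℓ : L →ₗ[K] K) (v : n → L) (M : Matrix n n K) :
    ℓ ∘ (v ᵥ* M.map (algebraMap K L)) = (ℓ ∘ v) ᵥ* M := by
  ext j
  simp only [Function.comp_apply, vecMul, dotProduct, map_apply, map_sum]
  refine Finset.sum_congr rfl fun i _ => ?_
  rw [← Algebra.commutes, ← Algebra.smul_def, map_smul, smul_eq_mul, mul_comm]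

theorem abs_dotProduct_le (v y : n → ℝ) : |v ⬝ᵥ y| ≤ (∑ i, |v i|) * ‖y‖ := by
  rw [dotProduct, Finset.sum_mul]
  refine (Finset.abs_sum_le_sum_abs _ _).trans (Finset.sum_le_sum fun i _ => ?_)
  rw [abs_mul]
  exact mul_le_mul_of_nonneg_left (norm_le_pi_norm y i) (abs_nonneg _)

theorem measurable_mulVec (M : Matrix n n ℝ) : Measurable (M *ᵥ ·) :=
  (continuous_const.matrix_mulVec continuous_id).measurable

variable [DecidableEq n]

theorem exists_vecMul_eq_smul_of_isRoot_charpoly {K : Type*} [Field K] {A : Matrix n n K} {z : K}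
    (h : A.charpoly.IsRoot z) : ∃ v ≠ 0, v ᵥ* A = z • v := by
  rw [Polynomial.IsRoot, eval_charpoly, ← exists_vecMul_eq_zero_iff] at h
  obtain ⟨v, hv0, hv⟩ := h
  refine ⟨v, hv0, ?_⟩
  rw [vecMul_sub, sub_eq_zero] at hv
  rw [← hv, scalar_apply]
  ext i
  simp [vecMul_diagonal, mul_comm]

theorem vecMul_eq_inv_smul_of_mul_eq_one {K : Type*} [Field K] {A B : Matrix n n K} {v : n → K}
    {z : K} (hAB : A * B = 1) (hv : v ᵥ* A = z • v) : v ᵥ* B = z⁻¹ • v := by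
  have h : v = z • (v ᵥ* B) := by
    rw [← smul_vecMul, ← hv, vecMul_vecMul, hAB, vecMul_one]
  rcases eq_or_ne z 0 with rfl | hz
  · rw [zero_smul] at h
    rw [h, zero_vecMul, smul_zero]
  · calc v ᵥ* B = z⁻¹ • z • (v ᵥ* B) := by rw [smul_smul, inv_mul_cancel₀ hz, one_smul]
      _ = z⁻¹ • v := by rw [← h]

theorem exists_ne_zero_tendsto_vecMul_pow_zero {M : Matrix n n ℝ} {w : n → ℂ} {z : ℂ}
    (hw0 : w ≠ 0) (hw : w ᵥ* M.map (algebraMap ℝ ℂ) = z • w) (hz : ‖z‖ < 1) :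
    ∃ a : n → ℝ, a ≠ 0 ∧ Tendsto (fun k : ℕ => a ᵥ* M ^ k) atTop (𝓝 0) := by
  have hpow (k : ℕ) : w ᵥ* (M ^ k).map (algebraMap ℝ ℂ) = z ^ k • w := by
    induction k with
    | zero => simp
    | succ k ih =>
      rw [pow_succ, Matrix.map_mul, ← vecMul_vecMul, ih, smul_vecMul, hw, smul_smul, pow_succ]
  have hlim : Tendsto (fun k : ℕ => w ᵥ* (M ^ k).map (algebraMap ℝ ℂ)) atTop (𝓝 0) := by
    simp_rw [hpow]
    simpa using (tendsto_pow_atTop_nhds_zero_of_norm_lt_one hz).smul_const w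
  have hdecay (ℓ : ℂ →ₗ[ℝ] ℝ) : Tendsto (fun k : ℕ => (ℓ ∘ w) ᵥ* M ^ k) atTop (𝓝 0) := by
    simp_rw [← comp_vecMul_map_algebraMap ℓ]
    have hcont : Continuous fun v : n → ℂ => ℓ ∘ v :=
      continuous_pi fun j => ℓ.continuous_of_finiteDimensional.comp (continuous_apply j)
    have h0 : ℓ ∘ (0 : n → ℂ) = 0 := by ext; simp
    exact (h0 ▸ hcont.tendsto 0).comp hlim
  by_cases hre : Complex.re ∘ w = 0
  · refine ⟨Complex.im ∘ w, fun him => hw0 ?_, hdecay Complex.imLm⟩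
    funext j
    exact Complex.ext (congrFun hre j) (congrFun him j)
  · exact ⟨Complex.re ∘ w, hre, hdecay Complex.reLm⟩

theorem abs_dotProduct_le_of_mulVec_mem_closedBall {P Q : Matrix n n ℝ} (hQP : Q * P = 1)
    (a : n → ℝ) {x : n → ℝ} {r : ℝ} (hPx : P *ᵥ x ∈ Metric.closedBall 0 r) :
    |a ⬝ᵥ x| ≤ (∑ i, |(a ᵥ* Q) i|) * r := by
  calc |a ⬝ᵥ x| = |(a ᵥ* Q) ⬝ᵥ (P *ᵥ x)| := by
        rw [← dotProduct_mulVec, mulVec_mulVec, hQP, one_mulVec]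
    _ ≤ (∑ i, |(a ᵥ* Q) i|) * ‖P *ᵥ x‖ := abs_dotProduct_le _ _
    _ ≤ (∑ i, |(a ᵥ* Q) i|) * r :=
        mul_le_mul_of_nonneg_left (mem_closedBall_zero_iff.1 hPx) (by positivity)

end Matrix

theorem tendsto_measure_inter_abs_le_nhds_zero {E : Type*} [NormedAddCommGroup E]
    [NormedSpace ℝ E] [MeasurableSpace E] [BorelSpace E] [FiniteDimensional ℝ E]
    (μ : Measure E) [μ.IsAddHaarMeasure] {φ : E →ₗ[ℝ] ℝ} (hφ : φ ≠ 0) {s : Set E}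
    (hs : MeasurableSet s) (hμs : μ s ≠ ⊤) :
    Tendsto (fun ε => μ (s ∩ {x | |φ x| ≤ ε})) (𝓝 0) (𝓝 0) := by
  set slab := fun ε : ℝ => s ∩ {x | |φ x| ≤ ε}
  have hmeas (ε : ℝ) : MeasurableSet (slab ε) :=
    hs.inter (measurableSet_le (φ.continuous_of_finiteDimensional.abs).measurable measurable_const)
  have hmono : Monotone slab := fun ε δ h => inter_subset_inter_right s fun x hx => le_trans hx h
  have hslab_zero : μ (slab 0) = 0 := by
    have hker : μ (LinearMap.ker φ) = 0 :=
      Measure.addHaar_submodule μ _ (mt LinearMap.ker_eq_top.1 hφ)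
    exact measure_mono_null (fun x hx => abs_nonpos_iff.1 hx.2) hker
  have hright : Tendsto (μ ∘ slab) (𝓝[>] 0) (𝓝 0) := by
    have hInter : ⋂ ε > 0, slab ε = slab 0 := by
      ext x
      simp only [mem_iInter, slab, mem_inter_iff, mem_ofPred_eq]
      exact ⟨fun h => ⟨(h 1 one_pos).1, le_of_forall_gt_imp_ge_of_dense fun ε hε => (h ε hε).2⟩,
        fun h ε hε => ⟨h.1, h.2.trans hε.le⟩⟩
    simpa [hInter, hslab_zero] using tendsto_measure_biInter_gt (μ := μ)
      (fun ε _ => (hmeas ε).nullMeasurableSet) (fun ε δ _ h => hmono h)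
      ⟨1, one_pos, ne_top_of_le_ne_top hμs (measure_mono inter_subset_left)⟩
  have hleft : Tendsto (μ ∘ slab) (𝓝[≤] 0) (𝓝 0) :=
    tendsto_const_nhds.congr' <| eventually_nhdsWithin_of_forall fun ε hε =>
      (measure_mono_null (hmono hε) hslab_zero).symm
  rw [← nhdsLE_sup_nhdsGT]
  exact hleft.sup hright

section Functional

variable {α : Type*} [MeasurableSpace α]

theorem tendsto_integral_abs_zero_of_support_subset {ν : Measure α} {F : ℕ → α → ℝ}
    {S : ℕ → Set α} {C : ℝ} (hF : ∀ k x, |F k x| ≤ C) (hFS : ∀ k, Function.support (F k) ⊆ S k)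
    (hS : Tendsto (fun k => ν (S k)) atTop (𝓝 0)) :
    Tendsto (fun k => ∫ x, |F k x| ∂ν) atTop (𝓝 0) := by
  have hbound : ∀ᶠ k in atTop, ∫ x, |F k x| ∂ν ≤ C * ν.real (S k) := by
    filter_upwards [hS.eventually (gt_mem_nhds ENNReal.zero_lt_top)] with k hk
    have hcompl (x : α) (hx : x ∉ S k) : |F k x| = 0 :=
      abs_eq_zero.2 (Function.notMem_support.1 fun h => hx (hFS k h))
    rw [← setIntegral_eq_integral_of_forall_compl_eq_zero hcompl]
    refine (le_abs_self _).trans ?_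
    exact norm_setIntegral_le_of_norm_le_const (f := fun x => |F k x|) hk fun x _ => by
      rw [Real.norm_eq_abs, abs_abs]
      exact hF k x
  have hupper : Tendsto (fun k => C * ν.real (S k)) atTop (𝓝 0) := by
    simpa [measureReal_def] using ((ENNReal.tendsto_toReal ENNReal.zero_ne_top).comp hS).const_mul C
  exact tendsto_of_tendsto_of_tendsto_of_le_of_le' tendsto_const_nhds hupper
    (Eventually.of_forall fun k => integral_nonneg fun x => abs_nonneg _) hbound

variable (μ : (α → ℝ) → ℝ)

/-- Invariance under `𝒯_T` is `IsInvariantUnder μ (T⁻¹ *ᵥ ·)`. -/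
def IsInvariantUnder (p : α → α) : Prop :=
  ∀ f : α → ℝ, Measurable f → (∃ C, ∀ x, |f x| ≤ C) → μ (f ∘ p) = μ f

def IsSemilocal (B : Set α) : Prop :=
  ∀ f : α → ℝ, Measurable f → (∃ C, ∀ x, |f x| ≤ C) → μ f = μ (B.indicator f)

def IsL1ContinuousAtZero (ν : Measure α) (B : Set α) : Prop :=
  ∀ (F : ℕ → α → ℝ) (C : ℝ), (∀ n, Measurable (F n)) → (∀ n x, |F n x| ≤ C) →
    (∀ n, Function.support (F n) ⊆ B) → Tendsto (fun n => ∫ x, |F n x| ∂ν) atTop (𝓝 0) →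
    Tendsto (fun n => μ (F n)) atTop (𝓝 (μ 0))

variable {μ}

namespace IsInvariantUnder

theorem comp {p q : α → α} (hp : IsInvariantUnder μ p) (hq : IsInvariantUnder μ q)
    (hq_meas : Measurable q) : IsInvariantUnder μ (q ∘ p) := by
  rintro f hf ⟨C, hC⟩
  rw [← hq f hf ⟨C, hC⟩, ← hp (f ∘ q) (hf.comp hq_meas) ⟨C, fun x => hC (q x)⟩]
  rfl

theorem of_leftInverse {p q : α → α} (hp : IsInvariantUnder μ p) (hq_meas : Measurable q)
    (hqp : Function.LeftInverse q p) : IsInvariantUnder μ q := by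
  rintro f hf ⟨C, hC⟩
  rw [← hp (f ∘ q) (hf.comp hq_meas) ⟨C, fun x => hC (q x)⟩, Function.comp_assoc,
    hqp.comp_eq_id, Function.comp_id]

end IsInvariantUnder

theorem IsSemilocal.apply_eq_apply_zero {ν : Measure α} {B : Set α}
    (hB : MeasurableSet B) (hsl : IsSemilocal μ B) (hcont : IsL1ContinuousAtZero μ ν B)
    {p : ℕ → α → α} (hp_meas : ∀ k, Measurable (p k)) (hp : ∀ k, IsInvariantUnder μ (p k))
    {S : ℕ → Set α} (hS_zero : Tendsto (fun k => ν (S k)) atTop (𝓝 0))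
    (hS : ∀ k, B ∩ p k ⁻¹' B ⊆ S k)
    {f : α → ℝ} (hf : Measurable f) (hf_bdd : ∃ C, ∀ x, |f x| ≤ C) : μ f = μ 0 := by
  obtain ⟨C, hC⟩ := hf_bdd
  set g := B.indicator f
  have hg_meas : Measurable g := hf.indicator hB
  have hg_bdd (x : α) : |g x| ≤ C := (norm_indicator_le_norm_self f x).trans (hC x)
  set F : ℕ → α → ℝ := fun k => B.indicator (g ∘ p k)
  have hF_meas (k : ℕ) : Measurable (F k) := (hg_meas.comp (hp_meas k)).indicator hB
  have hF_bdd (k : ℕ) (x : α) : |F k x| ≤ C :=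
    (norm_indicator_le_norm_self (g ∘ p k) x).trans (hg_bdd _)
  have hF_supp (k : ℕ) : Function.support (F k) ⊆ S k := by
    refine Subset.trans (fun x hx => ?_) (hS k)
    obtain ⟨hxB, hgx⟩ := indicator_apply_ne_zero.1 hx
    exact ⟨hxB, (indicator_apply_ne_zero.1 hgx).1⟩
  have hμF (k : ℕ) : μ (F k) = μ f := by
    rw [← hsl _ (hg_meas.comp (hp_meas k)) ⟨C, fun x => hg_bdd _⟩, hp k g hg_meas ⟨C, hg_bdd⟩,
      ← hsl f hf ⟨C, hC⟩]
  have hlim := hcont F C hF_meas hF_bdd (fun k => support_indicator_subset)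
    (tendsto_integral_abs_zero_of_support_subset hF_bdd hF_supp hS_zero)
  simp only [hμF] at hlim
  exact tendsto_nhds_unique tendsto_const_nhds hlim

end Functional

section LinearAction

variable {n : Type*} [Fintype n] [DecidableEq n]

theorem IsInvariantUnder.mulVec_pow {μ : ((n → ℝ) → ℝ) → ℝ} {P : Matrix n n ℝ}
    (hP : IsInvariantUnder μ (P *ᵥ ·)) (k : ℕ) : IsInvariantUnder μ (P ^ k *ᵥ ·) := by
  induction k with
  | zero =>
    intro f _ _
    simp only [pow_zero, one_mulVec]
    rfl
  | succ k ih =>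
    have h : (P ^ (k + 1) *ᵥ ·) = (P ^ k *ᵥ ·) ∘ (P *ᵥ ·) := by
      ext x : 1
      simp [pow_succ, mulVec_mulVec]
    rw [h]
    exact hP.comp ih (measurable_mulVec _)

theorem IsSemilocal.apply_eq_apply_zero_of_tendsto_vecMul_pow {μ : ((n → ℝ) → ℝ) → ℝ} {r : ℝ}
    (hsl : IsSemilocal μ (Metric.closedBall 0 r))
    (hcont : IsL1ContinuousAtZero μ volume (Metric.closedBall 0 r))
    {P Q : Matrix n n ℝ} (hQP : Q * P = 1) (hP : IsInvariantUnder μ (P *ᵥ ·)) {a : n → ℝ}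
    (ha : a ≠ 0) (hdecay : Tendsto (fun k : ℕ => a ᵥ* Q ^ k) atTop (𝓝 0))
    {f : (n → ℝ) → ℝ} (hf : Measurable f) (hf_bdd : ∃ C, ∀ x, |f x| ≤ C) : μ f = μ 0 := by
  have hQP_pow (k : ℕ) : Q ^ k * P ^ k = 1 := by
    have hcomm : Commute Q P := hQP.trans (mul_eq_one_comm.1 hQP).symm
    rw [← hcomm.mul_pow, hQP, one_pow]
  have hε : Tendsto (fun k : ℕ => (∑ i, |(a ᵥ* Q ^ k) i|) * r) atTop (𝓝 0) := by
    have hnorm : Continuous fun v : n → ℝ => (∑ i, |v i|) * r := by fun_prop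
    simpa [Function.comp_def] using (hnorm.tendsto 0).comp hdecay
  have hφ : dotProductEquiv ℝ n a ≠ 0 := (LinearEquiv.map_ne_zero_iff _).2 ha
  have hslab := (tendsto_measure_inter_abs_le_nhds_zero volume hφ (s := Metric.closedBall 0 r)
    Metric.isClosed_closedBall.measurableSet measure_closedBall_lt_top.ne).comp hε
  exact hsl.apply_eq_apply_zero Metric.isClosed_closedBall.measurableSet hcont
    (fun k => measurable_mulVec _) hP.mulVec_pow hslab
    (fun k x hx => ⟨hx.1, abs_dotProduct_le_of_mulVec_mem_closedBall (hQP_pow k) a hx.2⟩) hf hf_bdd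

end LinearAction

theorem contracting_direction_implies_trivial_functional_general {N : ℕ}
    (T : Matrix (Fin N) (Fin N) ℝ) (hT : IsUnit T)
    (heig : ∃ z : ℂ, ((Matrix.charpoly T).map (algebraMap ℝ ℂ)).IsRoot z ∧ ‖z‖ ≠ 1)
    (r : ℝ)
    (μ : ((Fin N → ℝ) → ℝ) → ℝ)
    (hsl : ∀ f : (Fin N → ℝ) → ℝ, Measurable f → (∃ C, ∀ x, |f x| ≤ C) →
      μ f = μ ((Metric.closedBall (0 : Fin N → ℝ) r).indicator f))
    (hinv : ∀ f : (Fin N → ℝ) → ℝ, Measurable f → (∃ C, ∀ x, |f x| ≤ C) →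
      μ (fun x => f (T⁻¹ *ᵥ x)) = μ f)
    (hcont : ∀ (F : ℕ → (Fin N → ℝ) → ℝ) (C : ℝ),
      (∀ n, Measurable (F n)) →
      (∀ n x, |F n x| ≤ C) →
      (∀ n, Function.support (F n) ⊆ Metric.closedBall (0 : Fin N → ℝ) r) →
      Filter.Tendsto (fun n => ∫ x, |F n x|) Filter.atTop (nhds 0) →
      Filter.Tendsto (fun n => μ (F n)) Filter.atTop (nhds (μ 0))) :
    ∀ f : (Fin N → ℝ) → ℝ, Measurable f → (∃ C, ∀ x, |f x| ≤ C) → μ f = μ 0 := by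
  intro f hf hf_bdd
  obtain ⟨z, hz, hz_ne⟩ := heig
  rw [← charpoly_map] at hz
  obtain ⟨w, hw0, hw⟩ := exists_vecMul_eq_smul_of_isRoot_charpoly hz
  have hTT : T * T⁻¹ = 1 := mul_nonsing_inv T ((isUnit_iff_isUnit_det T).1 hT)
  have hμ_Tinv : IsInvariantUnder μ (T⁻¹ *ᵥ ·) := hinv
  have hμ_T : IsInvariantUnder μ (T *ᵥ ·) := hμ_Tinv.of_leftInverse (measurable_mulVec T)
    fun x => by rw [mulVec_mulVec, hTT, one_mulVec]
  rcases hz_ne.lt_or_gt with hz_lt | hz_gt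
  · obtain ⟨a, ha, hdecay⟩ := exists_ne_zero_tendsto_vecMul_pow_zero hw0 hw hz_lt
    exact IsSemilocal.apply_eq_apply_zero_of_tendsto_vecMul_pow hsl hcont hTT hμ_Tinv ha hdecay
      hf hf_bdd
  · have hw_inv : w ᵥ* T⁻¹.map (algebraMap ℝ ℂ) = z⁻¹ • w := vecMul_eq_inv_smul_of_mul_eq_one
      (by rw [← Matrix.map_mul, hTT, Matrix.map_one _ (map_zero _) (map_one _)]) hw
    obtain ⟨a, ha, hdecay⟩ := exists_ne_zero_tendsto_vecMul_pow_zero hw0 hw_inv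
      (by rwa [norm_inv, inv_lt_one₀ (by positivity)])
    exact IsSemilocal.apply_eq_apply_zero_of_tendsto_vecMul_pow hsl hcont
      (mul_eq_one_comm.1 hTT) hμ_T ha hdecay hf hf_bdd

/-- Let `T` be an invertible `N×N` real matrix having at least one
(complex) eigenvalue of modulus different from 1, let `r > 0`, let `B` be the closed ball
of radius `r` around the origin with indicator `χ`, and let `μ` be a real-valued functional
on bounded measurable functions `ℝ^N → ℝ` satisfying semi-locality (`μ(f) = μ(χ·f)`),
invariance (`μ(f ∘ T⁻¹) = μ(f)`) and the stated continuity property. Then `μ` is constant: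
`μ(f) = μ(0)` for every bounded measurable `f`. -/
theorem contracting_direction_implies_trivial_functional {N : ℕ}
    (T : Matrix (Fin N) (Fin N) ℝ) (hT : IsUnit T)
    (heig : ∃ z : ℂ, ((Matrix.charpoly T).map (algebraMap ℝ ℂ)).IsRoot z ∧ ‖z‖ ≠ 1)
    (r : ℝ) (hr : 0 < r)
    (μ : ((Fin N → ℝ) → ℝ) → ℝ)
    (hsl : ∀ f : (Fin N → ℝ) → ℝ, Measurable f → (∃ C, ∀ x, |f x| ≤ C) →
      μ f = μ ((Metric.closedBall (0 : Fin N → ℝ) r).indicator f))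
    (hinv : ∀ f : (Fin N → ℝ) → ℝ, Measurable f → (∃ C, ∀ x, |f x| ≤ C) →
      μ (fun x => f (T⁻¹ *ᵥ x)) = μ f)
    (hcont : ∀ (F : ℕ → (Fin N → ℝ) → ℝ) (C : ℝ),
      (∀ n, Measurable (F n)) →
      (∀ n x, |F n x| ≤ C) →
      (∀ n, Function.support (F n) ⊆ Metric.closedBall (0 : Fin N → ℝ) r) →
      Filter.Tendsto (fun n => ∫ x, |F n x|) Filter.atTop (nhds 0) →
      Filter.Tendsto (fun n => μ (F n)) Filter.atTop (nhds (μ 0))) :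
    ∀ f : (Fin N → ℝ) → ℝ, Measurable f → (∃ C, ∀ x, |f x| ≤ C) → μ f = μ 0 :=
  contracting_direction_implies_trivial_functional_general T hT heig r μ hsl hinv hcont
end

section
/- Let T : ℝ² → ℝ² be the shear map given by the matrix with rows (1, 1) and (0, 1), let r > 0, let B be the closed ball of radius r around the origin in ℝ² with indicator function χ, and let μ be a real-valued functional on bounded measurable functions ℝ² → ℝ satisfying: (i) semi-locality, μ(f) = μ(χ · f) for all f; (ii) invariance, μ(f ∘ T⁻¹) = μ(f) for all f; (iii) continuity, whenever (fₙ) is a uniformly bounded sequence of measurable functions supported in B with ∫ |fₙ| → 0, then μ(fₙ) → μ(0). Then μ is constant: μ(f) = μ(0) for every bounded measurable f. -/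
/-!
Let `g = χ·f` and `ψ = (T⁻¹ *ᵥ ·)`. By invariance and semi-locality every `χ·(g ∘ ψ^[k])` has
the same value `μ f`. But it is supported in `B ∩ Tᵏ B`: if `|x₀| ≤ r` and `|x₀ - k x₁| ≤ r` then
`|x₁| ≤ 2r/k`, so its support lies in a strip of area `O(r²/k)` and `∫ |χ·(g ∘ ψ^[k])| → 0`.
Continuity then forces `μ f = μ 0`.
-/

open MeasureTheory Matrix

/-- The shear matrix with rows `(1, 1)` and `(0, 1)`. -/
def shearT : Matrix (Fin 2) (Fin 2) ℝ := !![1, 1; 0, 1]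

open Filter Set Topology Function
open scoped ENNReal

theorem apply_comp_iterate_eq_of_forall_apply_comp_eq {α : Type*} [MeasurableSpace α]
    (μ : (α → ℝ) → ℝ) {φ : α → α} (hφ : Measurable φ)
    (hinv : ∀ f : α → ℝ, Measurable f → (∃ C, ∀ x, |f x| ≤ C) → μ (fun x => f (φ x)) = μ f)
    {f : α → ℝ} (hf : Measurable f) (hfb : ∃ C, ∀ x, |f x| ≤ C) (k : ℕ) :
    μ (f ∘ φ^[k]) = μ f := by
  induction k with
  | zero => rfl
  | succ k ih =>
    obtain ⟨C, hC⟩ := hfb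
    rw [Function.iterate_succ, ← Function.comp_assoc, ← ih]
    exact hinv _ (hf.comp (hφ.iterate k)) ⟨C, fun x => hC _⟩

theorem abs_indicator_le_of_abs_le {α : Type*} {s : Set α} {f : α → ℝ} {C : ℝ}
    (hf : ∀ x, |f x| ≤ C) (x : α) : |s.indicator f x| ≤ C :=
  (norm_indicator_le_norm_self f x).trans (hf x)

theorem integral_abs_le_of_support_subset {α : Type*} [MeasurableSpace α] {μ : Measure α}
    {F : α → ℝ} {S : Set α} {C : ℝ} (hS : μ S < ∞) (hFS : support F ⊆ S)
    (hC : ∀ x, |F x| ≤ C) : ∫ x, |F x| ∂μ ≤ C * μ.real S := by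
  have hzero : ∀ x ∉ S, |F x| = 0 := fun x hx => by
    rw [abs_eq_zero]; exact notMem_support.1 fun h => hx (hFS h)
  calc ∫ x, |F x| ∂μ = ∫ x in S, |F x| ∂μ :=
        (setIntegral_eq_integral_of_forall_compl_eq_zero hzero).symm
    _ ≤ ‖∫ x in S, |F x| ∂μ‖ := le_abs_self _
    _ ≤ C * μ.real S := norm_setIntegral_le_of_norm_le_const hS fun x _ => by
        rw [Real.norm_eq_abs, abs_abs]; exact hC x

theorem shearT_inv : shearT⁻¹ = !![1, -1; 0, 1] :=
  Matrix.inv_eq_left_inv (by simp [shearT, Matrix.one_fin_two])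

theorem shearT_inv_mulVec_iterate (k : ℕ) (x : Fin 2 → ℝ) :
    (shearT⁻¹ *ᵥ ·)^[k] x = ![x 0 - k * x 1, x 1] := by
  induction k with
  | zero => ext i; fin_cases i <;> simp
  | succ k ih =>
    rw [Function.iterate_succ_apply', ih, shearT_inv]
    ext i; fin_cases i <;> simp [mulVec, dotProduct, Fin.sum_univ_two]; ring

theorem measurable_shearT_inv_mulVec : Measurable (shearT⁻¹ *ᵥ · : (Fin 2 → ℝ) → Fin 2 → ℝ) := by
  fun_prop

theorem abs_apply_le_of_mem_closedBall {ι : Type*} [Fintype ι] {r : ℝ} {x : ι → ℝ}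
    (hx : x ∈ Metric.closedBall 0 r) (i : ι) : |x i| ≤ r :=
  (norm_le_pi_norm x i).trans (mem_closedBall_zero_iff.1 hx)

theorem mul_abs_le_of_mem_closedBall_of_shear_iterate_mem {r : ℝ} {k : ℕ} {x : Fin 2 → ℝ}
    (hx : x ∈ Metric.closedBall 0 r) (hkx : (shearT⁻¹ *ᵥ ·)^[k] x ∈ Metric.closedBall 0 r) :
    k * |x 1| ≤ 2 * r := by
  have h₀ := abs_apply_le_of_mem_closedBall hx 0
  have h₁ := abs_apply_le_of_mem_closedBall hkx 0
  rw [shearT_inv_mulVec_iterate] at h₁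
  calc (k : ℝ) * |x 1| = |x 0 - (x 0 - k * x 1)| := by
        rw [sub_sub_cancel, abs_mul, Nat.abs_cast]
    _ ≤ |x 0| + |x 0 - k * x 1| := abs_sub _ _
    _ ≤ 2 * r := by simp only [Fin.isValue, cons_val_zero] at h₁; linarith

theorem closedBall_inter_preimage_shear_iterate_subset {r : ℝ} {k : ℕ} (hk : 0 < k) :
    Metric.closedBall 0 r ∩ (shearT⁻¹ *ᵥ ·)^[k] ⁻¹' Metric.closedBall 0 r ⊆
      Icc ![-r, -(2 * r / k)] ![r, 2 * r / k] := by
  rintro x ⟨hx, hkx⟩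
  have h₀ := abs_apply_le_of_mem_closedBall hx 0
  have h₁ : |x 1| ≤ 2 * r / k :=
    (le_div_iff₀' (by positivity)).2 (mul_abs_le_of_mem_closedBall_of_shear_iterate_mem hx hkx)
  rw [abs_le] at h₀ h₁
  constructor <;> intro i <;> fin_cases i <;> simp [h₀, h₁]

theorem volume_real_Icc_neg_fin_two {a b : ℝ} (ha : 0 ≤ a) (hb : 0 ≤ b) :
    volume.real (Icc ![-a, -b] ![a, b]) = 2 * a * (2 * b) := by
  rw [measureReal_def, Real.volume_Icc_pi_toReal, Fin.prod_univ_two]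
  · simp only [Fin.isValue, cons_val_zero, cons_val_one]; ring
  · intro i; fin_cases i <;> simp <;> linarith

theorem tendsto_integral_abs_indicator_comp_shear_iterate {r C : ℝ} (hr : 0 ≤ r)
    {g : (Fin 2 → ℝ) → ℝ} (hg : support g ⊆ Metric.closedBall 0 r) (hC : ∀ x, |g x| ≤ C) :
    Tendsto (fun n : ℕ => ∫ x, |(Metric.closedBall 0 r).indicator
      (g ∘ (shearT⁻¹ *ᵥ ·)^[n + 1]) x|) atTop (𝓝 0) := by
  have hbound : ∀ n : ℕ, ∫ x, |(Metric.closedBall 0 r).indicator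
      (g ∘ (shearT⁻¹ *ᵥ ·)^[n + 1]) x| ≤ 8 * r ^ 2 * C * (1 / ((n : ℝ) + 1)) := by
    intro n
    have hsupp : support ((Metric.closedBall 0 r).indicator (g ∘ (shearT⁻¹ *ᵥ ·)^[n + 1])) ⊆
        Icc ![-r, -(2 * r / (n + 1 : ℕ))] ![r, 2 * r / (n + 1 : ℕ)] := by
      rw [support_indicator, support_comp_eq_preimage]
      exact (inter_subset_inter_right _ (preimage_mono hg)).trans
        (closedBall_inter_preimage_shear_iterate_subset n.succ_pos)
    calc _ ≤ C * volume.real (Icc ![-r, -(2 * r / (n + 1 : ℕ))] ![r, 2 * r / (n + 1 : ℕ)]) :=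
          integral_abs_le_of_support_subset measure_Icc_lt_top hsupp
            (abs_indicator_le_of_abs_le fun x => hC _)
      _ = 8 * r ^ 2 * C * (1 / ((n : ℝ) + 1)) := by
          rw [volume_real_Icc_neg_fin_two hr (by positivity)]; push_cast; field_simp; ring
  refine squeeze_zero (fun n => integral_nonneg fun x => abs_nonneg _) hbound ?_
  simpa only [mul_zero] using
    (tendsto_one_div_add_atTop_nhds_zero_nat (𝕜 := ℝ)).const_mul (8 * r ^ 2 * C)

/-- Let `T` be the shear map given by the matrix with rows `(1, 1)` and
`(0, 1)`, let `r > 0`, let `B` be the closed ball of radius `r` around the origin in `ℝ²`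
with indicator `χ`, and let `μ` be a real-valued functional on bounded measurable functions
`ℝ² → ℝ` satisfying semi-locality (`μ(f) = μ(χ·f)`), invariance (`μ(f ∘ T⁻¹) = μ(f)`) and
the stated continuity property. Then `μ` is constant: `μ(f) = μ(0)` for every bounded
measurable `f`. -/
theorem shear_invariance_implies_trivial_functional
    (r : ℝ) (hr : 0 < r)
    (μ : ((Fin 2 → ℝ) → ℝ) → ℝ)
    (hsl : ∀ f : (Fin 2 → ℝ) → ℝ, Measurable f → (∃ C, ∀ x, |f x| ≤ C) →
      μ f = μ ((Metric.closedBall (0 : Fin 2 → ℝ) r).indicator f))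
    (hinv : ∀ f : (Fin 2 → ℝ) → ℝ, Measurable f → (∃ C, ∀ x, |f x| ≤ C) →
      μ (fun x => f (shearT⁻¹ *ᵥ x)) = μ f)
    (hcont : ∀ (F : ℕ → (Fin 2 → ℝ) → ℝ) (C : ℝ),
      (∀ n, Measurable (F n)) →
      (∀ n x, |F n x| ≤ C) →
      (∀ n, Function.support (F n) ⊆ Metric.closedBall (0 : Fin 2 → ℝ) r) →
      Filter.Tendsto (fun n => ∫ x, |F n x|) Filter.atTop (nhds 0) →
      Filter.Tendsto (fun n => μ (F n)) Filter.atTop (nhds (μ 0))) :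
    ∀ f : (Fin 2 → ℝ) → ℝ, Measurable f → (∃ C, ∀ x, |f x| ≤ C) → μ f = μ 0 := by
  intro f hf ⟨C, hC⟩
  set B := Metric.closedBall (0 : Fin 2 → ℝ) r
  set g := B.indicator f
  have hg : Measurable g := hf.indicator measurableSet_closedBall
  have hgC : ∀ x, |g x| ≤ C := abs_indicator_le_of_abs_le hC
  set F : ℕ → (Fin 2 → ℝ) → ℝ := fun n => B.indicator (g ∘ (shearT⁻¹ *ᵥ ·)^[n + 1])
  have hF : ∀ n, Measurable (g ∘ (shearT⁻¹ *ᵥ ·)^[n + 1]) := fun n =>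
    hg.comp (measurable_shearT_inv_mulVec.iterate _)
  have hμF : ∀ n, μ (F n) = μ f := fun n => by
    rw [← hsl _ (hF n) ⟨C, fun x => hgC _⟩,
      apply_comp_iterate_eq_of_forall_apply_comp_eq μ measurable_shearT_inv_mulVec hinv hg
        ⟨C, hgC⟩, ← hsl f hf ⟨C, hC⟩]
  have hlim := hcont F C (fun n => (hF n).indicator measurableSet_closedBall)
    (fun n => abs_indicator_le_of_abs_le fun x => hgC _) (fun n => support_indicator_subset)
    (tendsto_integral_abs_indicator_comp_shear_iterate hr.le support_indicator_subset hgC)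
  simp only [hμF] at hlim
  exact tendsto_nhds_unique tendsto_const_nhds hlim
end
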